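/- arXiv:2310.04265 — 4 statements merged into one kernel-verified Lean document; each statement's English description precedes it below -/
import Mathlib

section
/- For every tournament T and every total order ≺ on V(T), the following two inequalities hold: χ⃗(T) ≤ χ(T^≺) and χ(T^≺) ≤ ω(T^≺) · χ⃗(T). -/
structure Dig (V : Type*) where
  Adj : V → V → Prop
  irrefl : ∀ v, ¬ Adj v v
  asymm : ∀ u v, Adj u v → ¬ Adj v u

structure Tournament (V : Type*) extends Dig V where
  total : ∀ u v, u ≠ v → Adj u v ∨ Adj v u

variable {V : Type*}

/-- The backedge graph of a digraph with respect to a (strict total) order `r`: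
`u` and `v` are adjacent iff the arc between them goes backwards with respect to `r`. -/
def Dig.backedge (D : Dig V) (r : V → V → Prop) : SimpleGraph V where
  Adj u v := (r u v ∧ D.Adj v u) ∨ (r v u ∧ D.Adj u v)
  symm := ⟨by intro u v h; tauto⟩
  loopless := ⟨by intro v h; rcases h with ⟨_, h⟩ | ⟨_, h⟩ <;> exact D.irrefl v h⟩

/-- The clique number of an undirected graph. -/
noncomputable def gOmega (G : SimpleGraph V) : ℕ :=
  sSup {n | ∃ s : Finset V, G.IsNClique n s}

/-- The chromatic number of an undirected graph (as a natural number). -/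
noncomputable def gChi (G : SimpleGraph V) : ℕ :=
  sInf {n | G.Colorable n}

/-- The sub-digraph induced on `S` is acyclic: there is no directed cycle inside `S`. -/
def Dig.AcyclicOn (D : Dig V) (S : Set V) : Prop :=
  ∀ v, ¬ Relation.TransGen (fun x y => x ∈ S ∧ y ∈ S ∧ D.Adj x y) v v

/-- The dichromatic number: the least `n` such that the vertices can be partitioned into
`n` acyclic parts. -/
noncomputable def Dig.dichi (D : Dig V) : ℕ :=
  sInf {n | ∃ c : V → Fin n, ∀ i, D.AcyclicOn {v | c v = i}}

/-- The clique number of a digraph: the minimum over all strict total orders of the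
clique number of the associated backedge graph. -/
noncomputable def Dig.cliqueNum (D : Dig V) : ℕ :=
  sInf {m | ∃ r : V → V → Prop, IsStrictTotalOrder V r ∧ gOmega (D.backedge r) = m}

/-!
A proper colouring of `T^r` is an acyclic colouring, because inside an independent set of `T^r`
every arc points forward along `r`. Conversely, a colour class of an acyclic colouring induces a
transitive subtournament, so on it the backedges, oriented from the `r`-smaller end, form a strict
partial order whose chains are cliques of `T^r`. Mirsky's theorem splits each class into
`ω(T^r)` antichains, i.e. independent sets of `T^r`.
-/

namespace Dig

variable (D : Dig V) {r : V → V → Prop}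

theorem acyclicOn_of_adj_imp [IsStrictOrder V r] {S : Set V}
    (h : ∀ x ∈ S, ∀ y ∈ S, D.Adj x y → r x y) : D.AcyclicOn S := fun v hv =>
  irrefl_of r v <| Relation.transGen_minimal (fun x y ⟨hx, hy, hxy⟩ => h x hx y hy hxy) v v hv

theorem rel_of_adj_of_not_backedge_adj [IsStrictTotalOrder V r] {x y : V} (hxy : D.Adj x y)
    (hb : ¬ (D.backedge r).Adj x y) : r x y := by
  rcases trichotomous_of r x y with h | rfl | h
  · exact h
  · exact absurd hxy (D.irrefl x)
  · exact absurd (Or.inr ⟨h, hxy⟩) hb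

theorem exists_acyclic_coloring_of_colorable_backedge [IsStrictTotalOrder V r] {n : ℕ}
    (h : (D.backedge r).Colorable n) : ∃ c : V → Fin n, ∀ i, D.AcyclicOn {v | c v = i} := by
  obtain ⟨C⟩ := h
  refine ⟨C, fun i => D.acyclicOn_of_adj_imp (r := r) fun x hx y hy hxy => ?_⟩
  refine D.rel_of_adj_of_not_backedge_adj hxy fun hb => C.valid hb ?_
  exact hx.trans hy.symm

theorem dichi_le_of_colorable_backedge [IsStrictTotalOrder V r] {n : ℕ}
    (h : (D.backedge r).Colorable n) : D.dichi ≤ n :=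
  Nat.sInf_le (D.exists_acyclic_coloring_of_colorable_backedge h)

variable [Finite V]

theorem dichi_le_gChi_backedge [IsStrictTotalOrder V r] : D.dichi ≤ gChi (D.backedge r) := by
  have := Fintype.ofFinite V
  have hchi : gChi (D.backedge r) ∈ {n | (D.backedge r).Colorable n} :=
    Nat.sInf_mem ⟨_, (D.backedge r).colorable_of_fintype⟩
  exact D.dichi_le_of_colorable_backedge hchi

theorem exists_acyclic_coloring_dichi : ∃ c : V → Fin D.dichi, ∀ i, D.AcyclicOn {v | c v = i} := by
  have := Fintype.ofFinite V
  obtain ⟨r, _⟩ : ∃ r : V → V → Prop, IsStrictTotalOrder V r :=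
    ⟨WellOrderingRel, inferInstance⟩
  have hdichi : D.dichi ∈ {n | ∃ c : V → Fin n, ∀ i, D.AcyclicOn {v | c v = i}} :=
    Nat.sInf_mem ⟨_, D.exists_acyclic_coloring_of_colorable_backedge
      (D.backedge r).colorable_of_fintype⟩
  exact hdichi

end Dig

theorem Tournament.adj_trans_of_acyclicOn (T : Tournament V) {S : Set V}
    (hS : T.AcyclicOn S) {x y z : V} (hx : x ∈ S) (hy : y ∈ S) (hz : z ∈ S)
    (hxy : T.Adj x y) (hyz : T.Adj y z) : T.Adj x z := by
  have hxz : x ≠ z := by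
    rintro rfl
    exact T.asymm x y hxy hyz
  refine (T.total x z hxz).resolve_right fun hzx => hS x ?_
  exact .tail (.tail (.single ⟨hx, hy, hxy⟩) ⟨hy, hz, hyz⟩) ⟨hz, hx, hzx⟩

namespace SimpleGraph

variable [Finite V] (G : SimpleGraph V) {p : V → V → Prop}

/-- Mirsky's theorem, via the height function `v ↦` size of a largest clique below `v`. -/
theorem exists_strictMono_fin_cliqueNum (hp : ∀ u v w, p u v → p v w → p u w)
    (hpG : ∀ u v, p u v → G.Adj u v) :
    ∃ f : V → Fin G.cliqueNum, ∀ u v, p u v → f u < f v := by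
  classical
  let below v := {n | ∃ s : Finset V, G.IsNClique n s ∧ ∀ u ∈ s, p u v}
  have below_bdd v : BddAbove (below v) :=
    ⟨G.cliqueNum, fun _ ⟨_, hs, _⟩ => hs.card_eq ▸ hs.isClique.card_le_cliqueNum⟩
  have below_nonempty v : (below v).Nonempty := ⟨0, ∅, by simp⟩
  let height v := sSup (below v)
  have height_lt u v (huv : p u v) : height u < height v := by
    obtain ⟨s, hs, hsu⟩ := Nat.sSup_mem (below_nonempty u) (below_bdd u)
    refine Nat.lt_of_succ_le (le_csSup (below_bdd v) ⟨insert u s, ?_, ?_⟩)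
    · exact hs.insert fun w hw => (hpG w u (hsu w hw)).symm
    · simpa [huv] using fun w hw => hp w u v (hsu w hw) huv
  have height_lt_cliqueNum v : height v < G.cliqueNum := by
    obtain ⟨s, hs, hsv⟩ := Nat.sSup_mem (below_nonempty v) (below_bdd v)
    have hs' := hs.insert fun w hw => (hpG w v (hsv w hw)).symm
    have := hs'.isClique.card_le_cliqueNum
    rw [hs'.card_eq] at this
    exact this
  exact ⟨fun v => ⟨height v, height_lt_cliqueNum v⟩, height_lt⟩

end SimpleGraph

theorem Tournament.gChi_backedge_le [Finite V] (T : Tournament V)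
    {r : V → V → Prop} [IsStrictTotalOrder V r] :
    gChi (T.backedge r) ≤ gOmega (T.backedge r) * T.dichi := by
  set G := T.backedge r
  obtain ⟨c, hc⟩ := T.exists_acyclic_coloring_dichi
  let p u v := c u = c v ∧ r u v ∧ T.Adj v u
  have hp : ∀ u v w, p u v → p v w → p u w := fun u v w ⟨huv, ruv, avu⟩ ⟨hvw, rvw, awv⟩ =>
    ⟨huv.trans hvw, trans_of r ruv rvw,
      T.adj_trans_of_acyclicOn (hc (c u)) (hvw.symm.trans huv.symm) huv.symm rfl awv avu⟩
  have hpG u v (h : p u v) : G.Adj u v := Or.inl h.2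
  obtain ⟨f, hf⟩ := G.exists_strictMono_fin_cliqueNum hp hpG
  have hcol : G.Colorable (G.cliqueNum * T.dichi) := by
    let C : G.Coloring (Fin G.cliqueNum × Fin T.dichi) := .mk (fun v => (f v, c v)) ?_
    · simpa using C.colorable
    intro u v hadj hfc
    obtain ⟨hfuv, hcuv⟩ := Prod.ext_iff.mp hfc
    rcases hadj with ⟨ruv, avu⟩ | ⟨rvu, auv⟩
    · exact (hf u v ⟨hcuv, ruv, avu⟩).ne hfuv
    · exact (hf v u ⟨hcuv.symm, rvu, auv⟩).ne hfuv.symm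
  exact Nat.sInf_le hcol

/-- For every tournament `T` and every total order `r` on its vertices,
`χ⃗(T) ≤ χ(T^r)` and `χ(T^r) ≤ ω(T^r) · χ⃗(T)`. -/
theorem stmt_2 (V : Type) [Fintype V] (T : Tournament V) (r : V → V → Prop)
    (hr : IsStrictTotalOrder V r) :
    T.toDig.dichi ≤ gChi (T.toDig.backedge r) ∧
      gChi (T.toDig.backedge r) ≤ gOmega (T.toDig.backedge r) * T.toDig.dichi :=
  ⟨T.dichi_le_gChi_backedge, T.gChi_backedge_le⟩
end

section
/- For every tournament T and every ω⃗-ordering ≺ of T, one has χ⃗(T) ≤ χ(T^≺) ≤ χ⃗(T)². -/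
variable {V : Type*}

/-!
A proper colouring of `T^≺` has colour classes on which every arc goes forward along `≺`, so
they are acyclic. Conversely, listing the classes of an optimal acyclic partition one after
another, each in its (transitive) tournament order, gives an ordering whose backedges all join
different classes, so `ω⃗(T) ≤ χ⃗(T)`. Inside one acyclic class the backedges of `≺` form a
comparability graph, which the height function colours with `ω(T^≺)` colours; pairing class and
height colours `T^≺` with `χ⃗(T) · ω(T^≺)` colours, and `ω(T^≺) = ω⃗(T) ≤ χ⃗(T)`.
-/

open Finset

section Graph

variable {V : Type*} (G : SimpleGraph V)

lemma le_gOmega [Fintype V] {n : ℕ} {s : Finset V} (hs : G.IsNClique n s) : n ≤ gOmega G :=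
  le_csSup ⟨Fintype.card V, by rintro m ⟨t, ht⟩; exact ht.card_eq ▸ card_le_univ t⟩ ⟨s, hs⟩

lemma gOmega_le_of_colorable {n : ℕ} (hc : G.Colorable n) : gOmega G ≤ n :=
  csSup_le ⟨0, ∅, by simp⟩ fun _ ⟨s, hs⟩ => hs.card_eq ▸ hs.isClique.card_le_of_colorable hc

lemma colorable_gChi [Fintype V] : G.Colorable (gChi G) :=
  Nat.sInf_mem (s := {n | G.Colorable n}) ⟨Fintype.card V, G.colorable_of_fintype⟩

lemma gChi_le_of_colorable {n : ℕ} (hc : G.Colorable n) : gChi G ≤ n :=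
  Nat.sInf_le hc

end Graph

section ChainHeight

variable {V : Type*} [Fintype V] (e : V → V → Prop)

open Classical in
noncomputable def chainHeight (v : V) : ℕ :=
  ({s | IsChain e (s : Set V) ∧ ∀ u ∈ s, e u v} : Finset (Finset V)).sup card

lemma exists_chain_card_eq_chainHeight (v : V) :
    ∃ s : Finset V, IsChain e (s : Set V) ∧ (∀ u ∈ s, e u v) ∧ #s = chainHeight e v := by
  classical
  obtain ⟨s, hs, hsup⟩ := exists_mem_eq_sup
    ({s | IsChain e (s : Set V) ∧ ∀ u ∈ s, e u v} : Finset (Finset V)) ⟨∅, by simp⟩ card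
  simp only [mem_filter, mem_univ, true_and] at hs
  exact ⟨s, hs.1, hs.2, by rw [chainHeight, ← hsup]⟩

lemma card_le_chainHeight {v : V} {s : Finset V} (hs : IsChain e (s : Set V))
    (hv : ∀ u ∈ s, e u v) : #s ≤ chainHeight e v := by
  classical
  unfold chainHeight
  exact le_sup (f := card) (by simpa using ⟨hs, hv⟩)

variable {e}

lemma chainHeight_lt_of_rel [IsStrictOrder V e] {u v : V} (huv : e u v) :
    chainHeight e u < chainHeight e v := by
  classical
  obtain ⟨s, hchain, hbelow, hcard⟩ := exists_chain_card_eq_chainHeight e u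
  have hu : u ∉ s := fun hu => irrefl u (hbelow u hu)
  calc chainHeight e u < #(insert u s) := by rw [card_insert_of_notMem hu, hcard]; omega
    _ ≤ chainHeight e v := by
      refine card_le_chainHeight e ?_ ?_
      · rw [coe_insert]
        exact hchain.insert fun b hb _ => Or.inr (hbelow b hb)
      · intro w hw
        rcases mem_insert.mp hw with rfl | hw
        · exact huv
        · exact _root_.trans (hbelow w hw) huv

lemma chainHeight_lt_gOmega [Std.Irrefl e] {G : SimpleGraph V} (hG : ∀ x y, e x y → G.Adj x y)
    (v : V) : chainHeight e v < gOmega G := by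
  classical
  obtain ⟨s, hchain, hbelow, hcard⟩ := exists_chain_card_eq_chainHeight e v
  have hv : v ∉ s := fun hv => irrefl v (hbelow v hv)
  have hclique : G.IsClique (insert v s : Finset V) := by
    rw [coe_insert]
    refine (hchain.insert fun b hb _ => Or.inr (hbelow b hb)).mono' ?_
    rintro x y (h | h)
    exacts [hG x y h, (hG y x h).symm]
  have := le_gOmega G ⟨hclique, rfl⟩
  rw [card_insert_of_notMem hv] at this
  omega

end ChainHeight

section Digraph

variable {V : Type*} (D : Dig V)

lemma Dig.acyclicOn_of_adj_imp_s3 (r : V → V → Prop) [IsStrictOrder V r] {S : Set V}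
    (h : ∀ x ∈ S, ∀ y ∈ S, D.Adj x y → r x y) : D.AcyclicOn S :=
  fun v hv => _root_.irrefl v <|
    Relation.transGen_minimal (fun x y ⟨hx, hy, hxy⟩ => h x hx y hy hxy) v v hv

lemma Dig.acyclicOn_of_subsingleton {S : Set V} (hS : S.Subsingleton) : D.AcyclicOn S := by
  intro v hv
  obtain ⟨w, ⟨hv, hw, hvw⟩, -⟩ := Relation.TransGen.head'_iff.mp hv
  exact D.irrefl v (hS hv hw ▸ hvw)

lemma Dig.dichi_le_gChi_backedge_s3 [Fintype V] (r : V → V → Prop) [IsStrictTotalOrder V r] :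
    D.dichi ≤ gChi (D.backedge r) := by
  obtain ⟨C⟩ := colorable_gChi (D.backedge r)
  refine Nat.sInf_le ⟨C, fun i => D.acyclicOn_of_adj_imp_s3 r fun x hx y hy hxy => ?_⟩
  rcases trichotomous_of r x y with h | rfl | h
  · exact h
  · exact absurd hxy (D.irrefl x)
  · exact absurd (hx.trans hy.symm) (C.valid (Or.inr ⟨h, hxy⟩))

lemma Dig.exists_acyclic_coloring_dichi_s3 [Fintype V] :
    ∃ c : V → Fin D.dichi, ∀ i, D.AcyclicOn {v | c v = i} :=
  Nat.sInf_mem (s := {n | ∃ c : V → Fin n, ∀ i, D.AcyclicOn {v | c v = i}})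
    ⟨_, Fintype.equivFin V, fun _ => D.acyclicOn_of_subsingleton fun _ hx _ hy =>
      (Fintype.equivFin V).injective (hx.trans hy.symm)⟩

end Digraph

namespace Tournament

variable {V : Type*} (T : Tournament V)

lemma adj_trans_of_acyclicOn_s3 {S : Set V} (hS : T.AcyclicOn S) {x y z : V}
    (hx : x ∈ S) (hy : y ∈ S) (hz : z ∈ S) (hxy : T.Adj x y) (hyz : T.Adj y z) : T.Adj x z := by
  have hxz : x ≠ z := by
    rintro rfl
    exact hS x (.tail (.single ⟨hx, hy, hxy⟩) ⟨hy, hx, hyz⟩)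
  refine (T.total x z hxz).resolve_right fun hzx => hS x ?_
  exact .tail (.tail (.single ⟨hx, hy, hxy⟩) ⟨hy, hz, hyz⟩) ⟨hz, hx, hzx⟩

def lexOrder {n : ℕ} (d : V → Fin n) (x y : V) : Prop :=
  d x < d y ∨ d x = d y ∧ T.Adj x y

lemma isStrictTotalOrder_lexOrder {n : ℕ} {d : V → Fin n}
    (hd : ∀ i, T.AcyclicOn {v | d v = i}) : IsStrictTotalOrder V (T.lexOrder d) where
  trichotomous x y hxy hyx := by
    by_contra hne
    rcases lt_trichotomy (d x) (d y) with h | h | h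
    · exact hxy (.inl h)
    · rcases T.total x y hne with h' | h'
      exacts [hxy (.inr ⟨h, h'⟩), hyx (.inr ⟨h.symm, h'⟩)]
    · exact hyx (.inl h)
  irrefl x h := h.elim (lt_irrefl _) fun h => T.irrefl x h.2
  trans x y z hxy hyz := by
    rcases hxy with hxy | ⟨hxy, hxy'⟩ <;> rcases hyz with hyz | ⟨hyz, hyz'⟩
    · exact .inl (hxy.trans hyz)
    · exact .inl (hyz ▸ hxy)
    · exact .inl (hxy ▸ hyz)
    · exact .inr ⟨hxy.trans hyz,
        T.adj_trans_of_acyclicOn_s3 (hd (d x)) rfl hxy.symm (hxy.trans hyz).symm hxy' hyz'⟩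

lemma colorable_backedge_lexOrder {n : ℕ} (d : V → Fin n) :
    (T.backedge (T.lexOrder d)).Colorable n := by
  refine ⟨SimpleGraph.Coloring.mk d fun {x y} hxy heq => ?_⟩
  rcases hxy with ⟨h | ⟨-, h⟩, h'⟩ | ⟨h | ⟨-, h⟩, h'⟩
  · exact h.ne heq
  · exact T.asymm _ _ h h'
  · exact h.ne heq.symm
  · exact T.asymm _ _ h h'

lemma cliqueNum_le_dichi [Fintype V] : T.cliqueNum ≤ T.dichi := by
  obtain ⟨d, hd⟩ := T.exists_acyclic_coloring_dichi_s3
  exact (Nat.sInf_le ⟨_, T.isStrictTotalOrder_lexOrder hd, rfl⟩ : T.cliqueNum ≤ _).trans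
    (gOmega_le_of_colorable _ (T.colorable_backedge_lexOrder d))

lemma gChi_backedge_le_dichi_mul_gOmega [Fintype V] (r : V → V → Prop) [IsStrictOrder V r] :
    gChi (T.backedge r) ≤ T.dichi * gOmega (T.backedge r) := by
  obtain ⟨d, hd⟩ := T.exists_acyclic_coloring_dichi_s3
  -- inside one acyclic class the backedges, oriented along `r`, form a strict partial order
  let e x y := d x = d y ∧ r x y ∧ T.Adj y x
  have : IsStrictOrder V e :=
    { irrefl x h := _root_.irrefl x h.2.1
      trans x y z hxy hyz := ⟨hxy.1.trans hyz.1, _root_.trans hxy.2.1 hyz.2.1,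
        T.adj_trans_of_acyclicOn_s3 (hd (d x)) (hxy.1.trans hyz.1).symm hxy.1.symm rfl
          hyz.2.2 hxy.2.2⟩ }
  have hheight v : chainHeight e v < gOmega (T.backedge r) :=
    chainHeight_lt_gOmega (fun x y h => Or.inl h.2) v
  refine gChi_le_of_colorable _ ⟨SimpleGraph.Coloring.mk
    (fun v => finProdFinEquiv (d v, ⟨chainHeight e v, hheight v⟩)) fun {x y} hxy heq => ?_⟩
  simp only [finProdFinEquiv.apply_eq_iff_eq, Prod.mk.injEq, Fin.mk.injEq] at heq
  rcases hxy with ⟨h, h'⟩ | ⟨h, h'⟩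
  · exact (chainHeight_lt_of_rel ⟨heq.1, h, h'⟩).ne heq.2
  · exact (chainHeight_lt_of_rel ⟨heq.1.symm, h, h'⟩).ne heq.2.symm

end Tournament

/-- For every tournament `T` and every ω⃗-ordering `r` of `T`,
`χ⃗(T) ≤ χ(T^r) ≤ χ⃗(T)²`. -/
theorem stmt_3 (V : Type) [Fintype V] (T : Tournament V) (r : V → V → Prop)
    (hr : IsStrictTotalOrder V r)
    (hopt : gOmega (T.toDig.backedge r) = T.toDig.cliqueNum) :
    T.toDig.dichi ≤ gChi (T.toDig.backedge r) ∧
      gChi (T.toDig.backedge r) ≤ T.toDig.dichi ^ 2 := by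
  refine ⟨T.dichi_le_gChi_backedge_s3 r, ?_⟩
  calc gChi (T.backedge r) ≤ T.dichi * gOmega (T.backedge r) :=
        T.gChi_backedge_le_dichi_mul_gOmega r
    _ ≤ T.dichi * T.dichi := Nat.mul_le_mul_left _ (hopt ▸ T.cliqueNum_le_dichi)
    _ = T.dichi ^ 2 := (sq _).symm
end

section
/- Let 𝒯 be a class of digraphs and K an integer such that for every D ∈ 𝒯 the underlying undirected graph of D has chromatic number at most K. Then the closure 𝒯^subst of 𝒯 under substitution is χ⃗-bounded by the function g(w) = (3K)^w; that is, every digraph D ∈ 𝒯^subst satisfies χ⃗(D) ≤ (3K)^{ω⃗(D)}. -/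
variable {V : Type*}

/-- The underlying undirected graph of a digraph. -/
def Dig.underlying (D : Dig V) : SimpleGraph V where
  Adj u v := D.Adj u v ∨ D.Adj v u
  symm := ⟨by intro u v h; tauto⟩
  loopless := ⟨by intro v h; rcases h with h | h <;> exact D.irrefl v h⟩

/-- The digraph obtained by substituting the digraph `D₂` for the vertex `u` of `D₁`. -/
def Dig.subst {V₁ V₂ : Type*} (D₁ : Dig V₁) (u : V₁) (D₂ : Dig V₂) :
    Dig ({v : V₁ // v ≠ u} ⊕ V₂) where
  Adj x y := D₁.Adj (Sum.elim Subtype.val (fun _ => u) x) (Sum.elim Subtype.val (fun _ => u) y)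
      ∨ (∃ a b, x = Sum.inr a ∧ y = Sum.inr b ∧ D₂.Adj a b)
  irrefl := by
    rintro x (h | ⟨a, b, ha, hb, h⟩)
    · exact D₁.irrefl _ h
    · rw [ha] at hb
      obtain rfl := Sum.inr_injective hb
      exact D₂.irrefl a h
  asymm := by
    rintro x y (h | ⟨a, b, ha, hb, h⟩) (h' | ⟨a', b', ha', hb', h'⟩)
    · exact D₁.asymm _ _ h h'
    · subst ha'; subst hb'
      simp only [Sum.elim_inr] at h
      exact D₁.irrefl u h
    · subst ha; subst hb
      simp only [Sum.elim_inr] at h'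
      exact D₁.irrefl u h'
    · subst ha; subst hb
      obtain rfl := Sum.inr_injective ha'
      obtain rfl := Sum.inr_injective hb'
      exact D₂.asymm _ _ h h'

/-- The closure of a class of digraphs under substitution. -/
inductive SubstClosureD (𝒯 : ∀ V : Type, Dig V → Prop) : ∀ V : Type, Dig V → Prop
  | base (V : Type) (D : Dig V) : 𝒯 V D → SubstClosureD 𝒯 V D
  | step (V₁ V₂ : Type) (D₁ : Dig V₁) (u : V₁) (D₂ : Dig V₂) :
      SubstClosureD 𝒯 V₁ D₁ → SubstClosureD 𝒯 V₂ D₂ →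
      SubstClosureD 𝒯 _ (D₁.subst u D₂)


/-!
Fix an order `ρ` realising `ω⃗(D)` and induct on `ω⃗`, then on the number of vertices. If
`D ∈ 𝒯^subst` and `S ⊆ V(D)` has two vertices, some `H ∈ 𝒯` and a non-constant map `π : S → V(H)`
make the arcs of `D[S]` between different fibres exactly the arcs of `H`. Colour `H` properly with
`K` colours. Reorder fibres so that in each fibre either no vertex or every vertex lies on a
backward arc to another fibre. In the second case the heads (resp. tails) of those backward arcs
have smaller `ω⃗`, as the partner of the extreme one extends any backedge clique, so they are
coloured recursively with `(2K)^(ω⃗-1)` colours, paired with the `H`-colour of the fibre and a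
head/tail bit. The remaining fibres are smaller and are coloured recursively with all `(2K)^ω⃗`
colours. A monochromatic arc between fibres then goes forward from its whole fibre to the other,
so a monochromatic cycle stays in one fibre, which is impossible. Hence
`χ⃗ ≤ (2K)^ω⃗ ≤ (3K)^ω⃗`.
-/

open Function Relation
open scoped Classical

theorem SimpleGraph.CliqueFreeOn.of_forall_adj_imp {V : Type*} {G G' : SimpleGraph V} {S : Set V}
    {n : ℕ} (hG : ∀ u ∈ S, ∀ v ∈ S, G'.Adj u v → G.Adj u v) (h : G.CliqueFreeOn S n) :
    G'.CliqueFreeOn S n := fun _ ht hcl =>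
  h ht ⟨fun u hu v hv huv => hG u (ht hu) v (ht hv) (hcl.1 hu hv huv), hcl.2⟩

theorem SimpleGraph.CliqueFreeOn.of_forall_exists_adj {V : Type*} {G : SimpleGraph V}
    {S P : Set V} {n : ℕ} (hS : G.CliqueFreeOn S (n + 2)) (hPS : P ⊆ S)
    (h : ∀ t : Finset V, ↑t ⊆ P → t.Nonempty → ∃ z ∈ S, ∀ a ∈ t, G.Adj z a) :
    G.CliqueFreeOn P (n + 1) := by
  intro t ht hcl
  obtain ⟨z, hz, hzt⟩ := h t ht (Finset.card_pos.1 (by rw [hcl.card_eq]; omega))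
  refine hS ?_ (hcl.insert hzt)
  rw [Finset.coe_insert]
  exact Set.insert_subset hz (ht.trans hPS)

theorem colorable_of_gChi_le {V : Type*} [Finite V] {G : SimpleGraph V} {K : ℕ} (h : gChi G ≤ K) :
    G.Colorable K :=
  have := Fintype.ofFinite V
  (Nat.sInf_mem (s := {n | G.Colorable n}) ⟨_, G.colorable_of_fintype⟩).mono h

theorem cliqueFree_gOmega_add_one {V : Type*} [Fintype V] (G : SimpleGraph V) :
    G.CliqueFree (gOmega G + 1) := fun t ht => by
  have hbdd : BddAbove {n | ∃ s : Finset V, G.IsNClique n s} :=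
    ⟨Fintype.card V, fun n ⟨s, hs⟩ => hs.card_eq ▸ s.card_le_univ⟩
  exact Nat.not_succ_le_self _ (le_csSup hbdd ⟨t, ht⟩)

theorem exists_gt_forall_notMem_Ioo (F : Finset ℚ) (a : ℚ) :
    ∃ c, a < c ∧ ∀ y ∈ F, y ∉ Set.Ioo a c := by
  let above := insert (a + 1) (F.filter (a < ·))
  refine ⟨above.min' (Finset.insert_nonempty _ _), ?_, ?_⟩
  · rw [Finset.lt_min'_iff]
    intro y hy
    rcases Finset.mem_insert.1 hy with rfl | hy
    · linarith
    · exact (Finset.mem_filter.1 hy).2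
  · rintro y hy ⟨hay, hyc⟩
    exact (above.min'_le y (Finset.mem_insert_of_mem (Finset.mem_filter.2 ⟨hy, hay⟩))).not_gt hyc

/-- `ℚ` is order-isomorphic to each of its open intervals, so `T` fits into a gap right after `a`
that contains no other value of `ρ`. -/
theorem exists_reembed_after {V : Type*} [Finite V] (ρ : V → ℚ) (hρ : Injective ρ) (T : Set V)
    (a : ℚ) :
    ∃ ρ' : V → ℚ, Injective ρ' ∧ (∀ v ∉ T, ρ' v = ρ v) ∧
      (∀ u ∈ T, ∀ v ∈ T, ρ' u < ρ' v ↔ ρ u < ρ v) ∧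
      ∀ v ∈ T, ∀ z ∉ T, ρ z < ρ' v ↔ ρ z ≤ a := by
  obtain ⟨c, hac, hfree⟩ := exists_gt_forall_notMem_Ioo (Set.toFinite (ρ '' Tᶜ)).toFinset a
  have hfree' : ∀ z ∉ T, ρ z ∉ Set.Ioo a c := fun z hz =>
    hfree _ ((Set.Finite.mem_toFinset _).2 ⟨z, hz, rfl⟩)
  have : Nonempty (Set.Ioo a c) := Set.nonempty_Ioo_subtype hac
  obtain ⟨e⟩ := Order.iso_of_countable_dense ℚ (Set.Ioo a c)
  let ρ' v := if v ∈ T then (e (ρ v) : ℚ) else ρ v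
  have hT : ∀ v ∈ T, ρ' v = e (ρ v) := fun v hv => if_pos hv
  have hTc : ∀ v ∉ T, ρ' v = ρ v := fun v hv => if_neg hv
  have hmem : ∀ v ∈ T, ρ' v ∈ Set.Ioo a c := fun v hv => hT v hv ▸ (e (ρ v)).2
  refine ⟨ρ', fun u v huv => ?_, hTc, fun u hu v hv => ?_, fun v hv z hz => ?_⟩
  · by_cases hu : u ∈ T <;> by_cases hv : v ∈ T
    · rw [hT u hu, hT v hv] at huv
      exact hρ (e.injective (Subtype.ext huv))
    · exact absurd (hTc v hv ▸ huv ▸ hmem u hu) (hfree' v hv)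
    · exact absurd (hTc u hu ▸ huv.symm ▸ hmem v hv) (hfree' u hu)
    · rw [hTc u hu, hTc v hv] at huv
      exact hρ huv
  · rw [hT u hu, hT v hv, Subtype.coe_lt_coe, e.lt_iff_lt]
  · have hv' := hmem v hv
    constructor
    · intro h
      by_contra! haz
      exact hfree' z hz ⟨haz, h.trans hv'.2⟩
    · intro h
      exact h.trans_lt hv'.1

theorem exists_injective_rat_of_isStrictTotalOrder {V : Type*} [Finite V] (r : V → V → Prop)
    [IsStrictTotalOrder V r] : ∃ ρ : V → ℚ, Injective ρ ∧ r = (ρ · < ρ ·) := by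
  let := linearOrderOfSTO r
  obtain ⟨f⟩ := Order.embedding_from_countable_to_dense V ℚ
  exact ⟨f, f.injective, funext₂ fun u v => propext f.lt_iff_lt.symm⟩

namespace Dig

variable {V W : Type*}

section Acyclic

variable (D : Dig V)

theorem AcyclicOn.mono {D : Dig V} {S T : Set V} (hST : S ⊆ T) (hT : D.AcyclicOn T) :
    D.AcyclicOn S := fun v hv =>
  hT v (TransGen.mono (fun _ _ ⟨hx, hy, h⟩ => ⟨hST hx, hST hy, h⟩) _ _ hv)

theorem acyclicOn_of_subsingleton_s8 {S : Set V} (hS : S.Subsingleton) : D.AcyclicOn S := by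
  intro v hv
  obtain ⟨b, ⟨hv, hb, hvb⟩, -⟩ := TransGen.head'_iff.1 hv
  obtain rfl := hS hv hb
  exact D.irrefl v hvb

/-- A cycle inside `C` either stays in one fibre of `π`, or leaves it along an arc whose whole
source fibre precedes its whole target fibre in `ρ`; such steps compose, so they cannot close up. -/
theorem acyclicOn_of_fiberwise {β : Type*} [Preorder β] (π : V → W) (ρ : V → β) {C : Set V}
    (hfib : ∀ x, D.AcyclicOn {v | v ∈ C ∧ π v = x})
    (hcross : ∀ u ∈ C, ∀ v ∈ C, π u ≠ π v → D.Adj u v →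
      ∀ u' ∈ C, π u' = π u → ∀ v' ∈ C, π v' = π v → ρ u' < ρ v') :
    D.AcyclicOn C := by
  let Below (x y : W) : Prop := ∀ u ∈ C, π u = x → ∀ v ∈ C, π v = y → ρ u < ρ v
  let InFiber (x : W) (u v : V) : Prop :=
    u ∈ {v | v ∈ C ∧ π v = x} ∧ v ∈ {v | v ∈ C ∧ π v = x} ∧ D.Adj u v
  have key : ∀ a b, TransGen (fun u v => u ∈ C ∧ v ∈ C ∧ D.Adj u v) a b →
      (π b = π a ∧ TransGen (InFiber (π a)) a b) ∨ Below (π a) (π b) := by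
    intro a b hab
    induction hab with
    | @single b h =>
      obtain ⟨ha, hb, hadj⟩ := h
      by_cases hπ : π b = π a
      · exact Or.inl ⟨hπ, .single ⟨⟨ha, rfl⟩, ⟨hb, hπ⟩, hadj⟩⟩
      · exact Or.inr fun u hu hua v hv hvb => hcross a ha b hb (Ne.symm hπ) hadj u hu hua v hv hvb
    | @tail b c _ h ih =>
      obtain ⟨hb, hc, hadj⟩ := h
      by_cases hπ : π c = π b
      · rcases ih with ⟨hba, hpath⟩ | hbelow
        · exact Or.inl ⟨hπ.trans hba, hpath.tail ⟨⟨hb, hba⟩, ⟨hc, hπ.trans hba⟩, hadj⟩⟩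
        · exact Or.inr (hπ ▸ hbelow)
      · have hbc : Below (π b) (π c) := hcross b hb c hc (Ne.symm hπ) hadj
        rcases ih with ⟨hba, -⟩ | hbelow
        · exact Or.inr (hba ▸ hbc)
        · exact Or.inr fun u hu hua v hv hvc =>
            (hbelow u hu hua b hb rfl).trans (hbc b hb rfl v hv hvc)
  intro v hv
  obtain ⟨_, ⟨hvC, -⟩, -⟩ := TransGen.head'_iff.1 hv
  rcases key v v hv with ⟨-, hpath⟩ | hbelow
  · exact hfib (π v) v hpath
  · exact lt_irrefl _ (hbelow v hvC rfl v hvC rfl)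

end Acyclic

section Quotient

variable {U : Type*} (D : Dig V) (H : Dig W) (π : V → W)

/-- The fibres of `π` are modules of `D[S]`, and the quotient is an induced subdigraph of `H`. -/
def IsQuotientOn (S : Set V) : Prop :=
  ∀ u ∈ S, ∀ v ∈ S, π u ≠ π v → (D.Adj u v ↔ H.Adj (π u) (π v))

theorem isQuotientOn_id (S : Set V) : D.IsQuotientOn D id S := fun _ _ _ _ _ => Iff.rfl

variable {D H π} in
theorem IsQuotientOn.comp {G : Dig U} {σ : W → U} {S : Set V} (hπ : D.IsQuotientOn H π S)
    (hσ : H.IsQuotientOn G σ (π '' S)) : D.IsQuotientOn G (σ ∘ π) S := fun u hu v hv hne =>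
  (hπ u hu v hv fun h => hne (congrArg σ h)).trans
    (hσ _ ⟨u, hu, rfl⟩ _ ⟨v, hv, rfl⟩ hne)

theorem subst_adj_inr_inr {V₁ V₂ : Type*} (D₁ : Dig V₁) (u : V₁) (D₂ : Dig V₂) (a b : V₂) :
    (D₁.subst u D₂).Adj (.inr a) (.inr b) ↔ D₂.Adj a b := by
  simp [Dig.subst, D₁.irrefl u]

theorem subst_adj_of_ne {V₁ V₂ : Type*} (D₁ : Dig V₁) (u : V₁) (D₂ : Dig V₂)
    {x y : {v // v ≠ u} ⊕ V₂}
    (hxy : Sum.elim Subtype.val (fun _ => u) x ≠ Sum.elim Subtype.val (fun _ => u) y) :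
    (D₁.subst u D₂).Adj x y ↔
      D₁.Adj (Sum.elim Subtype.val (fun _ => u) x) (Sum.elim Subtype.val (fun _ => u) y) := by
  refine or_iff_left ?_
  rintro ⟨a, b, rfl, rfl, -⟩
  exact hxy rfl

/-- A set meeting `V₁ - u` projects onto `D₁` by collapsing `V₂` to `u`; any other set lies in
`V₂`. -/
theorem subst_isQuotientOn {V₁ V₂ : Type*} (D₁ : Dig V₁) (u : V₁) (D₂ : Dig V₂)
    {S : Set ({v // v ≠ u} ⊕ V₂)} (hS : S.Nontrivial) :
    (∃ g, (D₁.subst u D₂).IsQuotientOn D₁ g S ∧ (g '' S).Nontrivial) ∨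
      ∃ g, (D₁.subst u D₂).IsQuotientOn D₂ g S ∧ (g '' S).Nontrivial := by
  by_cases hL : ∃ v, Sum.inl v ∈ S
  · obtain ⟨v, hv⟩ := hL
    let g : {v // v ≠ u} ⊕ V₂ → V₁ := Sum.elim Subtype.val (fun _ => u)
    refine Or.inl ⟨g, fun x _ y _ hxy => subst_adj_of_ne D₁ u D₂ hxy, ?_⟩
    obtain ⟨t, ht, htv⟩ := hS.exists_ne (.inl v)
    refine ⟨g (.inl v), ⟨_, hv, rfl⟩, g t, ⟨t, ht, rfl⟩, ?_⟩
    rcases t with t | t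
    · exact fun h => htv (congrArg Sum.inl (Subtype.ext h.symm))
    · exact v.2
  · push Not at hL
    have hR : ∀ x ∈ S, ∃ b, x = .inr b := by
      rintro (x | b) hx
      · exact absurd hx (hL x)
      · exact ⟨b, rfl⟩
    obtain ⟨b₀, -⟩ := hR _ hS.nonempty.some_mem
    let g : {v // v ≠ u} ⊕ V₂ → V₂ := Sum.elim (fun _ => b₀) id
    refine Or.inr ⟨g, fun x hx y hy _ => ?_, hS.image_of_injOn fun x hx y hy hxy => ?_⟩
    · obtain ⟨a, rfl⟩ := hR x hx
      obtain ⟨b, rfl⟩ := hR y hy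
      exact subst_adj_inr_inr D₁ u D₂ a b
    · obtain ⟨a, rfl⟩ := hR x hx
      obtain ⟨b, rfl⟩ := hR y hy
      exact congrArg Sum.inr hxy

end Quotient

section BackArc

variable (D : Dig V) (H : Dig W) (π : V → W) (ρ : V → ℚ)

/-- Under `IsQuotientOn`, an arc `z → v` of `D` between different fibres that goes backwards
in `ρ`. -/
def CrossBackArc (z v : V) : Prop := H.Adj (π z) (π v) ∧ ρ v < ρ z

def IsBackHead (S : Set V) (v : V) : Prop := ∃ z ∈ S, H.CrossBackArc π ρ z v

def IsBackTail (S : Set V) (v : V) : Prop := ∃ z ∈ S, H.CrossBackArc π ρ v z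

def OnBackArc (S : Set V) (v : V) : Prop := H.IsBackHead π ρ S v ∨ H.IsBackTail π ρ S v

def OnBackArcUniform (S : Set V) : Prop :=
  ∀ u ∈ S, ∀ v ∈ S, π u = π v → H.OnBackArc π ρ S u → H.OnBackArc π ρ S v

variable {D H π ρ}

theorem CrossBackArc.fiber_ne {z v : V} (h : H.CrossBackArc π ρ z v) : π z ≠ π v :=
  fun hzv => H.irrefl _ (hzv ▸ h.1)

theorem IsQuotientOn.backedge_adj_iff {S : Set V} (hmod : D.IsQuotientOn H π S) {u v : V}
    (hu : u ∈ S) (hv : v ∈ S) (hne : π u ≠ π v) :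
    (D.backedge (ρ · < ρ ·)).Adj u v ↔ H.CrossBackArc π ρ u v ∨ H.CrossBackArc π ρ v u := by
  simp only [backedge, CrossBackArc, hmod u hu v hv hne, hmod v hv u hu hne.symm]
  tauto

/-- The tail of the backward arc into the `ρ`-last of these heads extends any backedge clique
among them. -/
theorem IsQuotientOn.cliqueFreeOn_isBackHead {S : Set V} (hmod : D.IsQuotientOn H π S) {n : ℕ}
    (hS : (D.backedge (ρ · < ρ ·)).CliqueFreeOn S (n + 2)) (x : W) :
    (D.backedge (ρ · < ρ ·)).CliqueFreeOn {v | v ∈ S ∧ π v = x ∧ H.IsBackHead π ρ S v} (n + 1) := by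
  refine hS.of_forall_exists_adj (fun v hv => hv.1) fun t ht htne => ?_
  obtain ⟨m, hm, hmax⟩ := t.exists_max_image ρ htne
  obtain ⟨-, hmx, z, hz, hzm⟩ := ht hm
  refine ⟨z, hz, fun a ha => ?_⟩
  obtain ⟨haS, hax, -⟩ := ht ha
  have hza : H.CrossBackArc π ρ z a := ⟨hax.trans hmx.symm ▸ hzm.1, (hmax a ha).trans_lt hzm.2⟩
  exact (hmod.backedge_adj_iff hz haS hza.fiber_ne).2 (Or.inl hza)

theorem IsQuotientOn.cliqueFreeOn_isBackTail {S : Set V} (hmod : D.IsQuotientOn H π S) {n : ℕ}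
    (hS : (D.backedge (ρ · < ρ ·)).CliqueFreeOn S (n + 2)) (x : W) :
    (D.backedge (ρ · < ρ ·)).CliqueFreeOn {v | v ∈ S ∧ π v = x ∧ H.IsBackTail π ρ S v} (n + 1) := by
  refine hS.of_forall_exists_adj (fun v hv => hv.1) fun t ht htne => ?_
  obtain ⟨m, hm, hmin⟩ := t.exists_min_image ρ htne
  obtain ⟨-, hmx, z, hz, hmz⟩ := ht hm
  refine ⟨z, hz, fun a ha => ?_⟩
  obtain ⟨haS, hax, -⟩ := ht ha
  have haz : H.CrossBackArc π ρ a z := ⟨hax.trans hmx.symm ▸ hmz.1, hmz.2.trans_le (hmin a ha)⟩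
  exact (hmod.backedge_adj_iff hz haS haz.fiber_ne.symm).2 (Or.inr haz)

/-- Moved right after `q`, the vertices of the fibre of `q` relate to all other fibres as `q`
does. -/
theorem IsQuotientOn.exists_reorder_fiber [Finite V] {S : Set V} (hmod : D.IsQuotientOn H π S)
    (hρ : Injective ρ) {q : V} (hq : q ∈ S) (hqb : ¬ H.OnBackArc π ρ S q) :
    ∃ ρ' : V → ℚ, Injective ρ' ∧
      (∀ u ∈ S, ∀ v ∈ S, (D.backedge (ρ' · < ρ' ·)).Adj u v → (D.backedge (ρ · < ρ ·)).Adj u v) ∧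
      ∀ v ∈ S, H.OnBackArc π ρ' S v → H.OnBackArc π ρ S v ∧ π v ≠ π q := by
  let T := {v | v ∈ S ∧ π v = π q}
  obtain ⟨ρ', hρ', hout, hin, hcmp⟩ := exists_reembed_after ρ hρ T (ρ q)
  have hsame : ∀ u v, (u ∈ T ↔ v ∈ T) → (ρ' u < ρ' v ↔ ρ u < ρ v) := by
    intro u v huv
    by_cases hu : u ∈ T
    · exact hin u hu v (huv.1 hu)
    · rw [hout u hu, hout v (huv.not.1 hu)]
  have hsep : ∀ u ∈ S, ∀ v ∈ S, ¬(u ∈ T ↔ v ∈ T) → ¬H.CrossBackArc π ρ' u v := by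
    rintro u hu v hv huv ⟨hH, hlt⟩
    by_cases huT : u ∈ T
    · have hvT : v ∉ T := fun h => huv (iff_of_true huT h)
      have hle : ρ v ≤ ρ q := (hcmp u huT v hvT).1 (hout v hvT ▸ hlt)
      have hvq : v ≠ q := fun h => hvT (h ▸ ⟨hq, rfl⟩)
      exact hqb (.inr ⟨v, hv, huT.2 ▸ hH, hle.lt_of_ne (hρ.ne hvq)⟩)
    · have hvT : v ∈ T := by_contra fun h => huv (iff_of_false huT h)
      have hqu : ¬ρ u ≤ ρ q := fun h => (hout u huT ▸ hlt).not_gt ((hcmp v hvT u huT).2 h)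
      exact hqb (.inl ⟨u, hu, hvT.2 ▸ hH, not_le.1 hqu⟩)
  have hcross : ∀ z ∈ S, ∀ v ∈ S, H.CrossBackArc π ρ' z v →
      H.CrossBackArc π ρ z v ∧ π z ≠ π q ∧ π v ≠ π q := by
    intro z hz v hv h
    have hzv : z ∈ T ↔ v ∈ T := by_contra fun hzv => hsep z hz v hv hzv h
    refine ⟨⟨h.1, (hsame v z hzv.symm).1 h.2⟩, fun hzq => ?_, fun hvq => ?_⟩
    · exact h.fiber_ne (hzq.trans (hzv.1 ⟨hz, hzq⟩).2.symm)
    · exact h.fiber_ne ((hzv.2 ⟨hv, hvq⟩).2.trans hvq.symm)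
  refine ⟨ρ', hρ', fun u hu v hv h => ?_, fun v hv h => ?_⟩
  · by_cases huv : u ∈ T ↔ v ∈ T
    · simp only [backedge] at h ⊢
      rwa [hsame u v huv, hsame v u huv.symm] at h
    · have hne : π u ≠ π v := fun h =>
        huv ⟨fun hu' => ⟨hv, h ▸ hu'.2⟩, fun hv' => ⟨hu, h.symm ▸ hv'.2⟩⟩
      rcases (hmod.backedge_adj_iff hu hv hne).1 h with h | h
      · exact absurd h (hsep u hu v hv huv)
      · exact absurd h (hsep v hv u hu fun h' => huv h'.symm)
  · rcases h with ⟨z, hz, hzv⟩ | ⟨z, hz, hvz⟩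
    · obtain ⟨h, -, hvq⟩ := hcross z hz v hv hzv
      exact ⟨.inl ⟨z, hz, h⟩, hvq⟩
    · obtain ⟨h, hvq, -⟩ := hcross v hv z hz hvz
      exact ⟨.inr ⟨z, hz, h⟩, hvq⟩

theorem IsQuotientOn.exists_onBackArcUniform [Finite V] {S : Finset V} (hmod : D.IsQuotientOn H π S)
    (hρ : Injective ρ) :
    ∃ ρ' : V → ℚ, Injective ρ' ∧
      (∀ u ∈ S, ∀ v ∈ S, (D.backedge (ρ' · < ρ' ·)).Adj u v → (D.backedge (ρ · < ρ ·)).Adj u v) ∧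
      H.OnBackArcUniform π ρ' S := by
  induction hn : (S.filter (H.OnBackArc π ρ S)).card using Nat.strong_induction_on
    generalizing ρ with
  | _ n ih =>
  by_cases huni : H.OnBackArcUniform π ρ S
  · exact ⟨ρ, hρ, fun _ _ _ _ h => h, huni⟩
  simp only [OnBackArcUniform, not_forall] at huni
  obtain ⟨u, hu, q, hq, huq, hub, hqb⟩ := huni
  obtain ⟨ρ₁, hρ₁, hsub₁, hback₁⟩ := hmod.exists_reorder_fiber hρ hq hqb
  have hlt : (S.filter (H.OnBackArc π ρ₁ S)).card < n := by
    rw [← hn]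
    refine Finset.card_lt_card ((Finset.ssubset_iff_of_subset fun v hv => ?_).2 ⟨u, ?_, ?_⟩)
    · rw [Finset.mem_filter] at hv ⊢
      exact ⟨hv.1, (hback₁ v hv.1 hv.2).1⟩
    · exact Finset.mem_filter.2 ⟨hu, hub⟩
    · exact fun h => (hback₁ u hu (Finset.mem_filter.1 h).2).2 huq
  obtain ⟨ρ₂, hρ₂, hsub₂, huni₂⟩ := ih _ hlt hρ₁ rfl
  exact ⟨ρ₂, hρ₂, fun u hu v hv h => hsub₁ u hu v hv (hsub₂ u hu v hv h), huni₂⟩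

variable (H π ρ) in
noncomputable def backArcColor {K n : ℕ} (C : H.underlying.Coloring (Fin K))
    (cA cB : W → V → Fin n) (S : Set V) (v : V) : Fin K × (Fin n ⊕ Fin n) :=
  (C (π v), if H.IsBackHead π ρ S v then .inl (cA (π v) v) else .inr (cB (π v) v))

variable {K n : ℕ} {C : H.underlying.Coloring (Fin K)} {cA cB : W → V → Fin n} {S : Finset V}

theorem backArcColor_ne_of_crossBackArc {S : Set V} {u v : V} (h : H.CrossBackArc π ρ u v) :
    H.backArcColor π ρ C cA cB S u ≠ H.backArcColor π ρ C cA cB S v :=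
  fun huv => C.valid (.inl h.1) (congrArg Prod.fst huv)

theorem acyclicOn_backArcColor_fiber
    (hA : ∀ x i, D.AcyclicOn
      {v | v ∈ S.filter (fun v => π v = x ∧ H.IsBackHead π ρ S v) ∧ cA x v = i})
    (hB : ∀ x i, D.AcyclicOn
      {v | v ∈ S.filter (fun v => π v = x ∧ H.IsBackTail π ρ S v) ∧ cB x v = i})
    {x : W} (hx : ∀ v ∈ S, π v = x → H.OnBackArc π ρ S v) (k : Fin K × (Fin n ⊕ Fin n)) :
    D.AcyclicOn {v | v ∈ S ∧ π v = x ∧ H.backArcColor π ρ C cA cB S v = k} := by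
  rcases k with ⟨k, j | j⟩
  · refine (hA x j).mono fun v ⟨hvS, hvx, hv⟩ => ?_
    simp only [backArcColor, Prod.mk.injEq] at hv
    split_ifs at hv with hhead
    · exact ⟨Finset.mem_filter.2 ⟨hvS, hvx, hhead⟩, hvx ▸ Sum.inl_injective hv.2⟩
    · exact hv.2.elim
  · refine (hB x j).mono fun v ⟨hvS, hvx, hv⟩ => ?_
    simp only [backArcColor, Prod.mk.injEq] at hv
    split_ifs at hv with hhead
    · exact hv.2.elim
    · have htail := (hx v hvS hvx).resolve_left hhead
      exact ⟨Finset.mem_filter.2 ⟨hvS, hvx, htail⟩, hvx ▸ Sum.inr_injective hv.2⟩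

/-- Fibres without backward cross arcs reuse the whole palette `Fin (2 * K * n)`, which the other
fibres see as `Fin K × (Fin n ⊕ Fin n)`. -/
theorem IsQuotientOn.exists_acyclicColoring_of_parts (hmod : D.IsQuotientOn H π S)
    (hρ : Injective ρ) (huni : H.OnBackArcUniform π ρ S) (hH : H.underlying.Colorable K)
    (hA : ∀ x i, D.AcyclicOn
      {v | v ∈ S.filter (fun v => π v = x ∧ H.IsBackHead π ρ S v) ∧ cA x v = i})
    (hB : ∀ x i, D.AcyclicOn
      {v | v ∈ S.filter (fun v => π v = x ∧ H.IsBackTail π ρ S v) ∧ cB x v = i})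
    (cF : W → V → Fin (2 * K * n))
    (hF : ∀ x i, D.AcyclicOn {v | v ∈ S.filter (π · = x) ∧ cF x v = i}) :
    ∃ c : V → Fin (2 * K * n), ∀ i, D.AcyclicOn {v | v ∈ S ∧ c v = i} := by
  obtain ⟨C⟩ := hH
  let e : Fin K × (Fin n ⊕ Fin n) ≃ Fin (2 * K * n) := Fintype.equivFinOfCardEq (by simp; ring)
  let c (v : V) : Fin (2 * K * n) :=
    if H.OnBackArc π ρ S v then e (H.backArcColor π ρ C cA cB S v) else cF (π v) v
  have hc : ∀ v, H.OnBackArc π ρ S v → H.backArcColor π ρ C cA cB S v = e.symm (c v) :=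
    fun v hv => by simp only [c, if_pos hv, Equiv.symm_apply_apply]
  refine ⟨c, fun i => acyclicOn_of_fiberwise D π ρ (fun x => ?_) ?_⟩
  · by_cases hx : ∃ v ∈ S, π v = x ∧ H.OnBackArc π ρ S v
    · obtain ⟨v₀, hv₀, hv₀x, hv₀b⟩ := hx
      have hall : ∀ v ∈ S, π v = x → H.OnBackArc π ρ S v :=
        fun v hv hvx => huni v₀ hv₀ v hv (hv₀x.trans hvx.symm) hv₀b
      refine (acyclicOn_backArcColor_fiber (C := C) hA hB hall (e.symm i)).mono ?_
      rintro v ⟨⟨hvS, rfl⟩, hvx⟩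
      exact ⟨hvS, hvx, hc v (hall v hvS hvx)⟩
    · refine (hF x i).mono ?_
      rintro v ⟨⟨hvS, rfl⟩, hvx⟩
      have hvb : ¬H.OnBackArc π ρ S v := fun hvb => hx ⟨v, hvS, hvx, hvb⟩
      exact ⟨Finset.mem_filter.2 ⟨hvS, hvx⟩, by simp only [c, if_neg hvb, hvx]⟩
  · rintro u ⟨hu, -⟩ v ⟨hv, -⟩ huv hadj u' ⟨hu', hu'i⟩ hu'u v' ⟨hv', hv'i⟩ hv'v
    have hne : π u' ≠ π v' := hu'u ▸ hv'v ▸ huv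
    refine (lt_or_gt_of_ne (hρ.ne fun h => hne (congrArg π h))).resolve_right fun hlt => ?_
    have hback : H.CrossBackArc π ρ u' v' := ⟨hu'u ▸ hv'v ▸ (hmod u hu v hv huv).1 hadj, hlt⟩
    exact backArcColor_ne_of_crossBackArc hback <| (hc u' (.inr ⟨v', hv', hback⟩)).trans <|
      (congrArg e.symm (hu'i.trans hv'i.symm)).trans (hc v' (.inl ⟨u', hu', hback⟩)).symm

end BackArc

end Dig

theorem finite_of_finite_subtype_ne_sum {V₁ V₂ : Type*} (u : V₁) [Finite ({v // v ≠ u} ⊕ V₂)] :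
    Finite V₁ :=
  have : Finite {v // v ≠ u} :=
    Finite.of_injective (Sum.inl : {v // v ≠ u} → {v // v ≠ u} ⊕ V₂) Sum.inl_injective
  Finite.of_equiv _ (Equiv.optionSubtypeNe u)

namespace SubstClosureD

variable {𝒯 : ∀ V : Type, Dig V → Prop}

theorem exists_isQuotientOn {V : Type} {D : Dig V} (hD : SubstClosureD 𝒯 V D)
    [hV : Finite V] {S : Set V} (hS : S.Nontrivial) :
    ∃ (W : Type) (_ : Finite W) (H : Dig W), 𝒯 W H ∧
      ∃ π : V → W, D.IsQuotientOn H π S ∧ (π '' S).Nontrivial := by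
  induction hD generalizing hV with
  | base V D hT => exact ⟨V, inferInstance, D, hT, id, D.isQuotientOn_id S, by rwa [Set.image_id]⟩
  | step V₁ V₂ D₁ u D₂ _ _ ih₁ ih₂ =>
    have := finite_of_finite_subtype_ne_sum (V₂ := V₂) u
    have : Finite V₂ := Finite.of_injective _ (Sum.inr_injective (α := {v // v ≠ u}))
    rcases D₁.subst_isQuotientOn u D₂ hS with ⟨g, hg, hgS⟩ | ⟨g, hg, hgS⟩
    · obtain ⟨W, _, H, hH, π, hπ, hπS⟩ := ih₁ hgS
      exact ⟨W, inferInstance, H, hH, π ∘ g, hg.comp hπ, by rwa [Set.image_comp]⟩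
    · obtain ⟨W, _, H, hH, π, hπ, hπS⟩ := ih₂ hgS
      exact ⟨W, inferInstance, H, hH, π ∘ g, hg.comp hπ, by rwa [Set.image_comp]⟩

variable {K : ℕ}
  (hK : ∀ (V : Type) [Fintype V] (D : Dig V), 𝒯 V D → gChi D.underlying ≤ K)
include hK

theorem bound_pos {V : Type} {D : Dig V} (hD : SubstClosureD 𝒯 V D) [hV : Finite V] (v : V) :
    0 < K := by
  induction hD generalizing hV with
  | base V D hT =>
    have := Fintype.ofFinite V
    obtain ⟨C⟩ := colorable_of_gChi_le (hK V D hT)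
    exact (C v).pos
  | step V₁ V₂ D₁ u D₂ _ _ ih₁ _ =>
    have := finite_of_finite_subtype_ne_sum (V₂ := V₂) u
    exact ih₁ u

theorem exists_acyclicColoring {V : Type} [Finite V] {D : Dig V} (hD : SubstClosureD 𝒯 V D)
    (w : ℕ) (S : Finset V) (ρ : V → ℚ) (hρ : Injective ρ)
    (hS : (D.backedge (ρ · < ρ ·)).CliqueFreeOn S (w + 1)) :
    ∃ c : V → Fin ((2 * K) ^ w), ∀ i, D.AcyclicOn {v | v ∈ S ∧ c v = i} := by
  induction w generalizing S ρ with
  | zero =>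
    have hS : (S : Set V) = ∅ := by
      by_contra hne
      obtain ⟨v, hv⟩ := Set.nonempty_iff_ne_empty.2 hne
      exact hS (t := {v}) (by simpa using hv) (by simp)
    exact ⟨fun _ => 0, fun _ => D.acyclicOn_of_subsingleton_s8 fun v hv => by simp_all⟩
  | succ w ihw =>
  induction S using Finset.strongInduction generalizing ρ with
  | H S ihS =>
  by_cases hSn : (S : Set V).Nontrivial
  swap
  · refine ⟨fun v => ⟨0, pow_pos (Nat.mul_pos two_pos (hD.bound_pos hK v)) _⟩,
      fun i => D.acyclicOn_of_subsingleton_s8 ?_⟩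
    exact (Set.not_nontrivial_iff.1 hSn).anti fun v hv => hv.1
  obtain ⟨W, _, H, hH, π, hmod, hπS⟩ := hD.exists_isQuotientOn hSn
  have := Fintype.ofFinite W
  obtain ⟨ρ', hρ', hsub, huni⟩ := hmod.exists_onBackArcUniform hρ
  have hS' := hS.of_forall_adj_imp hsub
  choose cA hA using fun x => ihw (S.filter fun v => π v = x ∧ H.IsBackHead π ρ' S v) ρ' hρ'
    (by rw [Finset.coe_filter]; exact hmod.cliqueFreeOn_isBackHead hS' x)
  choose cB hB using fun x => ihw (S.filter fun v => π v = x ∧ H.IsBackTail π ρ' S v) ρ' hρ'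
    (by rw [Finset.coe_filter]; exact hmod.cliqueFreeOn_isBackTail hS' x)
  have hfib : ∀ x, S.filter (π · = x) ⊂ S := fun x => by
    obtain ⟨_, ⟨z, hz, rfl⟩, hzx⟩ := hπS.exists_ne x
    exact Finset.filter_ssubset.2 ⟨z, hz, hzx⟩
  rw [pow_succ'] at ihS ⊢
  choose cF hF using fun x => ihS _ (hfib x) ρ' hρ'
    (hS'.subset _ (Finset.coe_subset.2 (Finset.filter_subset _ _)))
  exact hmod.exists_acyclicColoring_of_parts hρ' huni (colorable_of_gChi_le (hK W H hH)) hA hB cF hF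

end SubstClosureD

/-- If every digraph of a class `𝒯` has underlying graph with chromatic number at most `K`,
then the closure of `𝒯` under substitution is χ⃗-bounded by `w ↦ (3K)^w`. -/
theorem stmt_8 (𝒯 : ∀ V : Type, Dig V → Prop) (K : ℕ)
    (hK : ∀ (V : Type) [Fintype V] (D : Dig V), 𝒯 V D → gChi D.underlying ≤ K) :
    ∀ (V : Type) [Fintype V] (D : Dig V), SubstClosureD 𝒯 V D →
      D.dichi ≤ (3 * K) ^ D.cliqueNum := by
  intro V _ D hD
  obtain ⟨r, hr, hω⟩ : D.cliqueNum ∈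
      {m | ∃ r : V → V → Prop, IsStrictTotalOrder V r ∧ gOmega (D.backedge r) = m} :=
    Nat.sInf_mem ⟨_, WellOrderingRel, inferInstance, rfl⟩
  obtain ⟨ρ, hρ, rfl⟩ := exists_injective_rat_of_isStrictTotalOrder r
  obtain ⟨c, hc⟩ := hD.exists_acyclicColoring hK D.cliqueNum Finset.univ ρ hρ
    (hω ▸ (cliqueFree_gOmega_add_one _).cliqueFreeOn)
  calc D.dichi ≤ (2 * K) ^ D.cliqueNum :=
        Nat.sInf_le ⟨c, fun i => (hc i).mono fun v hv => And.intro (Finset.mem_univ v) hv⟩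
    _ ≤ (3 * K) ^ D.cliqueNum := Nat.pow_le_pow_left (by omega) _
end

section
/- If a tournament T admits a total ordering of its vertices whose backedge graph is a forest, then T admits a total ordering of its vertices whose backedge graph is a tree (i.e., a connected forest). -/
variable {V : Type*}

open SimpleGraph Function

variable {α : Type*}

lemma Equiv.swap_lt_swap_iff_of_covBy [LinearOrder α] {p q x y : α} (hpq : p ⋖ q)
    (hxy : s(x, y) ≠ s(p, q)) : Equiv.swap p q x < Equiv.swap p q y ↔ x < y := by
  obtain ⟨hpq, hnot_between⟩ := hpq
  rw [Equiv.swap_apply_def, Equiv.swap_apply_def]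
  split_ifs <;> grind [Sym2.eq_swap]

lemma IsStrictTotalOrder.exists_equiv_fin [Fintype V] (r : V → V → Prop)
    [IsStrictTotalOrder V r] : ∃ f : V ≃ Fin (Fintype.card V), ((· < ·) on f) = r := by
  classical
  let _ := linearOrderOfSTO r
  let e := (Fintype.orderIsoFinOfCardEq V rfl).symm
  exact ⟨e.toEquiv, funext₂ fun u v => propext e.lt_iff_lt⟩

lemma SimpleGraph.connected_of_reachable_of_covBy [Nonempty V] [LinearOrder α] [SuccOrder α]
    [IsSuccArchimedean α] {G : SimpleGraph V} (f : V ≃ α)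
    (h : ∀ a b, f a ⋖ f b → G.Reachable a b) : G.Connected := by
  have hsucc (i : α) (hi : ¬ IsMax i) : G.Reachable (f.symm i) (f.symm (Order.succ i)) :=
    h _ _ (by simpa using Order.covBy_succ_of_not_isMax hi)
  refine (connected_iff G).2 ⟨fun u v => ?_, inferInstance⟩
  have hchain := reflTransGen_of_succ (fun i j => G.Reachable (f.symm i) (f.symm j))
    (n := f u) (m := f v) (fun i hi => hsucc i (not_isMax_of_lt hi.2))
    (fun i hi => (hsucc i (not_isMax_of_lt hi.2)).symm)
  suffices G.Reachable (f.symm (f u)) (f.symm (f v)) by simpa using this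
  generalize f v = j at hchain
  induction hchain with
  | refl => rfl
  | tail _ hstep ih => exact ih.trans hstep

lemma Dig.backedge_eq_sup_edge (D : Dig V) {r r' : V → V → Prop} {a b : V} (hD : D.Adj a b)
    (hr : ¬ r b a) (hr' : r' b a) (hrr' : ∀ u v, s(u, v) ≠ s(a, b) → (r' u v ↔ r u v)) :
    D.backedge r' = D.backedge r ⊔ edge a b := by
  have hab : a ≠ b := by rintro rfl; exact D.irrefl a hD
  have hba := D.asymm a b hD
  ext u v
  simp only [Dig.backedge, sup_adj, edge_adj]
  by_cases huv : s(u, v) = s(a, b)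
  · rcases Sym2.eq_iff.1 huv with ⟨rfl, rfl⟩ | ⟨rfl, rfl⟩ <;> tauto
  · have hvu : s(v, u) ≠ s(a, b) := by rwa [Sym2.eq_swap]
    rw [hrr' u v huv, hrr' v u hvu]
    simp only [Sym2.eq_iff] at huv
    tauto

lemma Tournament.backedge_swap_eq_sup_edge [LinearOrder α] (T : Tournament V) (f : V ≃ α)
    {a b : V} (hab : f a ⋖ f b) (hnadj : ¬ (T.backedge ((· < ·) on f)).Adj a b) :
    T.backedge ((· < ·) on f.trans (Equiv.swap (f a) (f b))) =
      T.backedge ((· < ·) on f) ⊔ edge a b := by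
  have hTab : T.Adj a b := by
    refine (T.total a b (ne_of_apply_ne f hab.ne)).resolve_right fun hba => ?_
    exact hnadj (Or.inl ⟨hab.lt, hba⟩)
  refine T.backedge_eq_sup_edge hTab hab.lt.asymm (by simpa [onFun] using hab.lt)
    fun u v huv => ?_
  refine Equiv.swap_lt_swap_iff_of_covBy hab fun h => huv ?_
  simpa using congrArg (Sym2.map f.symm) h

/-- If a tournament has an ordering whose backedge graph is a forest, then it has an
ordering whose backedge graph is a tree. -/
theorem stmt_11 (V : Type) [Fintype V] [Nonempty V] (T : Tournament V)
    (h : ∃ r : V → V → Prop, IsStrictTotalOrder V r ∧ (T.toDig.backedge r).IsAcyclic) :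
    ∃ r : V → V → Prop, IsStrictTotalOrder V r ∧ (T.toDig.backedge r).IsTree := by
  classical
  obtain ⟨r, hr, hacyc⟩ := h
  obtain ⟨f₀, rfl⟩ := IsStrictTotalOrder.exists_equiv_fin r
  let B : (V ≃ Fin (Fintype.card V)) → SimpleGraph V := fun f => T.backedge ((· < ·) on f)
  obtain ⟨f, hf, hmax⟩ := (Finset.univ.filter fun f => (B f).IsAcyclic).exists_max_image
    (fun f => (B f).edgeFinset.card) ⟨f₀, by simpa using hacyc⟩
  simp only [Finset.mem_filter, Finset.mem_univ, true_and] at hf hmax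
  refine ⟨(· < ·) on f, f.injective.isStrictTotalOrder_onFun (· < ·),
    connected_of_reachable_of_covBy f fun a b hab => ?_, hf⟩
  by_contra hnreach
  have hnadj : ¬ (B f).Adj a b := fun h => hnreach h.reachable
  have hswap : B (f.trans (Equiv.swap (f a) (f b))) = B f ⊔ edge a b :=
    T.backedge_swap_eq_sup_edge f hab hnadj
  have hlt : B f < B (f.trans (Equiv.swap (f a) (f b))) :=
    hswap ▸ (B f).lt_sup_edge _ _ (ne_of_apply_ne f hab.ne) hnadj
  exact (Finset.card_lt_card (edgeFinset_strict_mono hlt)).not_ge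
    (hmax _ (hswap ▸ hf.sup_edge_of_not_reachable hnreach))
end
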